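/- The Fubini-type numbers satisfy a_n^{(α)} = 2^α · Σ_{i=0}^{n} ⟨−2α⟩_i · (−1)^i · S(n,i), where S(n,i) are Stirling numbers of the second kind and ⟨−2α⟩_i = (−2α)(−2α−1)⋯(−2α−i+1) is the falling factorial. -/

import Mathlib

open Finset PowerSeries

/-- Stirling numbers of the second kind. -/
def stirling2 : ℕ → ℕ → ℕ
  | 0, 0 => 1
  | 0, _ + 1 => 0
  | _ + 1, 0 => 0
  | n + 1, k + 1 => (k + 1) * stirling2 n (k + 1) + stirling2 n k

/-- The falling factorial `⟨x⟩_i = x(x-1)⋯(x-i+1)`. -/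
def fall (x : ℚ) (m : ℕ) : ℚ := ∏ j ∈ Finset.range m, (x - j)

/-!
With `u = eᵗ - 1` we have `2 - eᵗ = 1 - u`, so the generating function is `2^α (1 - u)^(-2α)`.
Substitute `u` into the binomial series `(1 - X)^(-m) = ∑ ⟨-m⟩ᵢ (-1)ⁱ Xⁱ / i!` and expand each
`uⁱ = i! ∑ₙ S(n,i) tⁿ / n!`; the latter holds because `(uⁱ)' = i (uⁱ + uⁱ⁻¹)` is, coefficientwise,
the recurrence of the Stirling numbers.
-/

open scoped Nat

theorem stirling2_eq_stirlingSecond : stirling2 = Nat.stirlingSecond := by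
  funext n k
  induction n generalizing k with
  | zero => cases k <;> rfl
  | succ n ih =>
    cases k with
    | zero => rfl
    | succ k => simp [stirling2, Nat.stirlingSecond_succ_succ, ih]

section ExpSubOne

variable {K : Type*} [Field K] [Algebra ℚ K]

theorem derivative_exp_sub_one_pow_succ (k : ℕ) :
    d⁄dX K ((exp K - 1) ^ (k + 1)) =
      C ((k : K) + 1) * ((exp K - 1) ^ (k + 1) + (exp K - 1) ^ k) := by
  rw [Derivation.leibniz_pow, map_sub, derivative_exp, Derivation.map_one_eq_zero, sub_zero,
    nsmul_eq_mul, smul_eq_mul, Nat.add_sub_cancel]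
  simp only [map_add, map_natCast, map_one]
  push_cast
  ring

theorem coeff_exp_sub_one_pow (n k : ℕ) :
    coeff n ((exp K - 1) ^ k) = (k ! * Nat.stirlingSecond n k / n ! : K) := by
  induction n generalizing k with
  | zero => cases k <;> simp
  | succ n ih =>
    cases k with
    | zero => simp
    | succ k =>
      have h := coeff_derivative ((exp K - 1) ^ (k + 1)) n
      rw [derivative_exp_sub_one_pow_succ, coeff_C_mul, map_add, ih, ih] at h
      have := algebraRat.charZero K
      have hn : (n : K) + 1 ≠ 0 := by exact_mod_cast n.succ_ne_zero
      have hf : (n ! : K) ≠ 0 := by exact_mod_cast n.factorial_ne_zero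
      rw [Nat.stirlingSecond_succ_succ, Nat.factorial_succ n, Nat.factorial_succ k] at *
      push_cast at h ⊢
      field_simp at h ⊢
      linear_combination -h

theorem hasSubst_exp_sub_one : HasSubst (exp K - 1) :=
  HasSubst.of_constantCoeff_zero' (by simp)

theorem coeff_subst_exp_sub_one (f : K⟦X⟧) (n : ℕ) :
    coeff n (f.subst (exp K - 1)) =
      (∑ i ∈ range (n + 1), coeff i f * i ! * Nat.stirlingSecond n i) / n ! := by
  rw [coeff_subst' hasSubst_exp_sub_one, finsum_eq_sum_of_support_subset (s := range (n + 1)),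
    sum_div]
  · refine sum_congr rfl fun i _ => ?_
    rw [smul_eq_mul, coeff_exp_sub_one_pow]
    ring
  · intro i hi
    by_contra hin
    simp [coeff_exp_sub_one_pow, Nat.stirlingSecond_eq_zero_of_lt (by simpa using hin)] at hi

end ExpSubOne

section NegBinomial

theorem fall_succ_left (x : ℚ) (i : ℕ) : fall x (i + 1) = x * fall (x - 1) i := by
  rw [fall, prod_range_succ', fall, Nat.cast_zero, sub_zero, mul_comm]
  congr 1
  refine prod_congr rfl fun j _ => ?_
  push_cast
  ring

noncomputable def negBinomialSeries (m : ℕ) : ℚ⟦X⟧ :=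
  mk fun i => fall (-m) i * (-1) ^ i / i !

theorem coeff_negBinomialSeries_mul_factorial (m i : ℕ) :
    coeff i (negBinomialSeries m) * i ! = fall (-m) i * (-1) ^ i := by
  simp [negBinomialSeries, Nat.factorial_ne_zero]

theorem negBinomialSeries_zero : negBinomialSeries 0 = 1 := by
  ext (_ | i)
  · simp [negBinomialSeries, fall]
  · simp [negBinomialSeries, fall_succ_left]

theorem one_sub_X_mul_negBinomialSeries_succ (m : ℕ) :
    (1 - X) * negBinomialSeries (m + 1) = negBinomialSeries m := by
  ext (_ | i)
  · simp [negBinomialSeries, fall]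
  · rw [sub_mul, one_mul, map_sub, coeff_succ_X_mul]
    simp only [negBinomialSeries, coeff_mk]
    rw [fall, prod_range_succ, ← fall, fall_succ_left, Nat.factorial_succ,
      show -(m : ℚ) - 1 = -((m + 1 : ℕ) : ℚ) by push_cast; ring]
    push_cast
    field_simp
    ring

theorem one_sub_X_pow_mul_negBinomialSeries (m : ℕ) :
    (1 - X) ^ m * negBinomialSeries m = 1 := by
  induction m with
  | zero => rw [pow_zero, one_mul, negBinomialSeries_zero]
  | succ m ih => rw [pow_succ, mul_assoc, one_sub_X_mul_negBinomialSeries_succ, ih]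

end NegBinomial

theorem two_sub_exp_pow_mul_subst_negBinomialSeries (m : ℕ) :
    (2 - exp ℚ) ^ m * (negBinomialSeries m).subst (exp ℚ - 1) = 1 := by
  have h := congrArg (substAlgHom (hasSubst_exp_sub_one (K := ℚ)))
    (one_sub_X_pow_mul_negBinomialSeries m)
  rwa [map_mul, map_pow, map_sub, map_one, coe_substAlgHom, subst_X hasSubst_exp_sub_one,
    show (1 : ℚ⟦X⟧) - (exp ℚ - 1) = 2 - exp ℚ by ring] at h

theorem fubiniTypeNumbers_explicit (α : ℕ) (a : ℕ → ℚ)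
    (ha : ((2 : PowerSeries ℚ) - PowerSeries.exp ℚ) ^ (2 * α) *
          PowerSeries.mk (fun n => a n / n.factorial) =
        (2 : PowerSeries ℚ) ^ α)
    (n : ℕ) :
    a n = 2 ^ α * ∑ i ∈ Finset.range (n + 1),
        fall (-(2 * α : ℚ)) i * (-1 : ℚ) ^ i * (stirling2 n i : ℚ) := by
  set A := PowerSeries.mk (fun n => a n / n !)
  set B := (negBinomialSeries (2 * α)).subst (exp ℚ - 1)
  have hA : A = C (2 ^ α) * B :=
    calc A = A * ((2 - exp ℚ) ^ (2 * α) * B) := by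
          rw [two_sub_exp_pow_mul_subst_negBinomialSeries, mul_one]
      _ = C (2 ^ α) * B := by rw [← mul_assoc, mul_comm A, ha, map_pow, map_ofNat]
  have hn := congrArg (coeff n) hA
  rw [coeff_mk, coeff_C_mul, coeff_subst_exp_sub_one, ← stirling2_eq_stirlingSecond] at hn
  simp_rw [coeff_negBinomialSeries_mul_factorial] at hn
  rw [div_eq_iff (by positivity)] at hn
  rw [hn]
  push_cast
  field_simp
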